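/- arXiv:cs/0605028 — 4 statements merged into one kernel-verified Lean document; each statement's English description precedes it below -/
import Mathlib

section
/- If H(W_K | Z) ≥ (1−ε)·H(W_K) for the full set K of independent messages, then for every subset S ⊆ K, H(W_S | Z) ≥ (1−ε')·H(W_S) with ε' = (1 + H(W_{S^c})/H(W_S))·ε. In particular, perfect collective secrecy for the ensemble implies perfect secrecy for every subset as ε → 0. -/
/-- If `H(W_K | Z) ≥ (1−ε)·H(W_K)` for the full set of independent messages,
then for every subset `S`, `H(W_S | Z) ≥ (1−ε')·H(W_S)` with
`ε' = (1 + H(W_{S^c})/H(W_S))·ε`.  Entropies are abstracted as reals satisfying the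
chain rule `H(W_K|Z) = H(W_S|Z) + H(W_{S^c}|W_S,Z)`, independence
`H(W_K) = H(W_S) + H(W_{S^c})`, and conditioning `H(W_{S^c}|W_S,Z) ≤ H(W_{S^c})`. -/
theorem collective_secrecy_subsets
    (ε : ℝ) (hε : 0 ≤ ε)
    (HWS HWSc : ℝ)            -- H(W_S), H(W_{S^c})
    (HWK_Z HWS_Z HWSc_WSZ : ℝ) -- H(W_K|Z), H(W_S|Z), H(W_{S^c}|W_S,Z)
    (hHWS : 0 < HWS) (hHWSc : 0 ≤ HWSc)
    (hchain : HWK_Z = HWS_Z + HWSc_WSZ)     -- chain rule of entropy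
    (hcondred : HWSc_WSZ ≤ HWSc)            -- conditioning cannot increase entropy
    (hsec : HWK_Z ≥ (1 - ε) * (HWS + HWSc)) -- collective secrecy for the ensemble
    : HWS_Z ≥ (1 - (1 + HWSc / HWS) * ε) * HWS := by
  have h : (1 - (1 + HWSc / HWS) * ε) * HWS = HWS - ε * (HWS + HWSc) := by
    field_simp
  rw [h]
  nlinarith
end

section
/- Under the same setup, if additionally h(Y) ≤ (n/2)·log(2πe(1+P)) for some P > 0, then h(Y) − h(Z) ≤ n[C^M − C^W], where C^M = (1/2)log(1+P) and C^W = (1/2)log(1+hP). -/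
/-!
With `t = 2^{2ξ}` one has `ξ - φ(ξ) = ½ log₂ (t / (2πe(1-h) + h t))`, which increases with `t`.
Hence the entropy power bound at `ξ = h(Y)/n` is at most its value at the Gaussian rate
`ξ = ½ log₂ (2πe(1+P))`, where the ratio is `(1+P)/(1+hP)`.
-/

open Real

/-- The paper's `φ(ξ)`, the entropy-power lower bound on `h(Z)/n` when `h(Y) = nξ` (in bits). -/
noncomputable def epiOutputEntropy (h ξ : ℝ) : ℝ :=
  (1 / 2) * logb 2 (2 * π * exp 1 * (1 - h + h * (2:ℝ) ^ (2 * ξ) / (2 * π * exp 1)))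

lemma monotoneOn_div_add_mul_self {A h : ℝ} (hA : 0 < A) (hh : 0 ≤ h) :
    MonotoneOn (fun t : ℝ => t / (A + h * t)) (Set.Ioi 0) := by
  intro s hs t ht hst
  simp only [Set.mem_Ioi] at hs ht
  rw [div_le_div_iff₀ (by positivity) (by positivity)]
  nlinarith

lemma sub_epiOutputEntropy_eq {h : ℝ} (hh0 : 0 ≤ h) (hh1 : h < 1) (ξ : ℝ) :
    ξ - epiOutputEntropy h ξ =
      (1 / 2) * logb 2 ((2:ℝ) ^ (2 * ξ) / (2 * π * exp 1 * (1 - h) + h * (2:ℝ) ^ (2 * ξ))) := by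
  have hc : 0 < 2 * π * exp 1 := by positivity
  have hden : 0 < 2 * π * exp 1 * (1 - h) + h * (2:ℝ) ^ (2 * ξ) :=
    add_pos_of_pos_of_nonneg (mul_pos hc (by linarith)) (by positivity)
  have hinner : 2 * π * exp 1 * (1 - h + h * (2:ℝ) ^ (2 * ξ) / (2 * π * exp 1)) =
      2 * π * exp 1 * (1 - h) + h * (2:ℝ) ^ (2 * ξ) := by
    field_simp
  rw [epiOutputEntropy, hinner, logb_div (by positivity) hden.ne',
    logb_rpow two_pos (by norm_num)]
  ring

lemma monotone_sub_epiOutputEntropy {h : ℝ} (hh0 : 0 ≤ h) (hh1 : h < 1) :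
    Monotone fun ξ => ξ - epiOutputEntropy h ξ := by
  intro a b hab
  simp only [sub_epiOutputEntropy_eq hh0 hh1]
  have hA : 0 < 2 * π * exp 1 * (1 - h) := mul_pos (by positivity) (by linarith)
  have hpow : (2:ℝ) ^ (2 * a) ≤ (2:ℝ) ^ (2 * b) :=
    rpow_le_rpow_of_exponent_le one_le_two (by linarith)
  gcongr 1 / 2 * ?_
  exact logb_le_logb_of_le one_lt_two (by positivity)
    (monotoneOn_div_add_mul_self hA hh0 (rpow_pos_of_pos two_pos _) (rpow_pos_of_pos two_pos _)
      hpow)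

lemma sub_epiOutputEntropy_capacity {h P : ℝ} (hh0 : 0 ≤ h) (hh1 : h < 1) (hP : 0 < P) :
    (1 / 2) * logb 2 (2 * π * exp 1 * (1 + P)) -
        epiOutputEntropy h ((1 / 2) * logb 2 (2 * π * exp 1 * (1 + P))) =
      (1 / 2) * logb 2 (1 + P) - (1 / 2) * logb 2 (1 + h * P) := by
  have hcap : (2:ℝ) ^ (2 * ((1 / 2) * logb 2 (2 * π * exp 1 * (1 + P)))) =
      2 * π * exp 1 * (1 + P) := by
    rw [← mul_assoc, mul_one_div_cancel two_ne_zero, one_mul,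
      rpow_logb two_pos (by norm_num) (by positivity)]
  have hratio : 2 * π * exp 1 * (1 + P) / (2 * π * exp 1 * (1 - h) + h * (2 * π * exp 1 * (1 + P)))
      = (1 + P) / (1 + h * P) := by
    rw [div_eq_div_iff (by positivity) (by positivity)]
    ring
  rw [sub_epiOutputEntropy_eq hh0 hh1, hcap, hratio, logb_div (by positivity) (by positivity)]
  ring

/-- Under the setup of the EPI lemma, if additionally
`h(Y) ≤ (n/2)·log(2πe(1+P))` for some `P > 0`, then
`h(Y) − h(Z) ≤ n[C^M − C^W]` with `C^M = (1/2)log(1+P)`, `C^W = (1/2)log(1+hP)`.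
The EPI lemma is used with `ξ = h(Y)/n`:
`h(Y) − h(Z) ≤ h(Y) − n·φ(h(Y)/n)` where
`φ(ξ) = (1/2)log(2πe(1−h+h·2^{2ξ}/(2πe)))`. -/
theorem entropy_difference_capacity_bound
    (n : ℕ) (hn : 0 < n) (h P : ℝ) (hh0 : 0 < h) (hh1 : h < 1) (hP : 0 < P)
    (hY hZ : ℝ)
    (hlemma : hY - hZ ≤ hY - n * ((1 / 2) * logb 2
      (2 * π * exp 1 * (1 - h + h * (2:ℝ) ^ (2 * (hY / n)) / (2 * π * exp 1)))))
    (hYbound : hY ≤ (n / 2) * logb 2 (2 * π * exp 1 * (1 + P))) :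
    hY - hZ ≤ n * ((1 / 2) * logb 2 (1 + P) - (1 / 2) * logb 2 (1 + h * P)) := by
  have hn' : (0:ℝ) < n := by exact_mod_cast hn
  have hξ : hY / n ≤ (1 / 2) * logb 2 (2 * π * exp 1 * (1 + P)) := by
    rw [div_le_iff₀ hn']; linarith
  calc hY - hZ ≤ hY - n * epiOutputEntropy h (hY / n) := hlemma
    _ = n * (hY / n - epiOutputEntropy h (hY / n)) := by field_simp
    _ ≤ n * ((1 / 2) * logb 2 (2 * π * exp 1 * (1 + P)) -
          epiOutputEntropy h ((1 / 2) * logb 2 (2 * π * exp 1 * (1 + P)))) :=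
      mul_le_mul_of_nonneg_left (monotone_sub_epiOutputEntropy hh0.le hh1 hξ) hn'.le
    _ = _ := by rw [sub_epiOutputEntropy_capacity hh0.le hh1 hP]
end

section
/- For the TDMA secrecy sum-rate maximization, the choice α_k* = P_k / Σ_{j=1}^K P_j simultaneously maximizes both Σ_k (α_k/2)·log((α_k+P_k)/(α_k+h·P_k)) and Σ_k (α_k/2)·log(1+P_k/α_k) over time-sharing vectors α with α_k ≥ 0 and Σ_k α_k = 1, yielding the maxima (1/2)·log((1+P_K)/(1+h·P_K)) and (1/2)·log(1+P_K) respectively, where P_K = Σ_k P_k. -/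
/-!
Each summand of `f` and `g` is a perspective `α * φ (P / α)` of a concave function `φ`
(the Gaussian wiretap secrecy rate, resp. the Gaussian capacity). Jensen's inequality with
the weights `α` bounds `∑ α_k φ (P_k / α_k)` by `φ (∑ P_k)`, and equality holds when all
ratios `P_k / α_k` coincide, i.e. for `α` proportional to `P`.
-/

open Real Finset

section Perspective

variable {ι : Type*} {s : Finset ι} {φ : ℝ → ℝ}

theorem ConcaveOn.sum_mul_perspective_le {D : Set ℝ} (hφ : ConcaveOn ℝ D φ) {w x : ι → ℝ}
    (hw : ∀ i ∈ s, 0 < w i) (hw₁ : ∑ i ∈ s, w i = 1) (hD : ∀ i ∈ s, x i / w i ∈ D) :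
    ∑ i ∈ s, w i * φ (x i / w i) ≤ φ (∑ i ∈ s, x i) := by
  have hx : ∑ i ∈ s, w i * (x i / w i) = ∑ i ∈ s, x i :=
    sum_congr rfl fun i hi => mul_div_cancel₀ _ (hw i hi).ne'
  simpa only [smul_eq_mul, hx] using hφ.le_map_sum (fun i hi => (hw i hi).le) hw₁ hD

theorem sum_mul_perspective_of_proportional (φ : ℝ → ℝ) {x : ι → ℝ}
    (hx : ∀ i ∈ s, x i ≠ 0) (hs : ∑ i ∈ s, x i ≠ 0) :
    ∑ i ∈ s, (x i / ∑ j ∈ s, x j) * φ (x i / (x i / ∑ j ∈ s, x j)) = φ (∑ i ∈ s, x i) := by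
  rw [sum_congr rfl fun i hi => by rw [div_div_cancel₀ (hx i hi)], ← sum_mul, ← sum_div,
    div_self hs, one_mul]

end Perspective

section SecrecyRate

variable {h : ℝ}

/-- The secrecy rate at signal-to-noise ratio `x` of a Gaussian wiretap channel whose
eavesdropper sees the signal with gain `h`; for `h = 0` it is the capacity `½ log₂ (1 + x)`. -/
noncomputable def gaussianSecrecyRate (h x : ℝ) : ℝ :=
  (1 / 2) * logb 2 ((1 + x) / (1 + h * x))

theorem hasDerivAt_log_one_add_sub_log_one_add_mul (hh : 0 ≤ h) {x : ℝ} (hx : 0 ≤ x) :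
    HasDerivAt (fun x => log (1 + x) - log (1 + h * x))
      ((1 - h) / ((1 + x) * (1 + h * x))) x := by
  have h₁ : 0 < 1 + x := by linarith
  have h₂ : 0 < 1 + h * x := by positivity
  have d₁ := ((hasDerivAt_id x).const_add 1).log h₁.ne'
  have d₂ := (((hasDerivAt_id x).const_mul h).const_add 1).log h₂.ne'
  refine (d₁.sub d₂).congr_deriv ?_
  simp only [id, mul_one]
  field_simp
  ring

theorem concaveOn_log_one_add_sub_log_one_add_mul (hh₀ : 0 ≤ h) (hh₁ : h ≤ 1) :
    ConcaveOn ℝ (Set.Ici 0) (fun x => log (1 + x) - log (1 + h * x)) := by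
  have hderiv x (hx : 0 ≤ x) := hasDerivAt_log_one_add_sub_log_one_add_mul hh₀ hx
  refine AntitoneOn.concaveOn_of_deriv (convex_Ici 0)
    (fun x hx => (hderiv x hx).continuousAt.continuousWithinAt) ?_ ?_ <;> rw [interior_Ici]
  · exact fun x hx => (hderiv x hx.le).differentiableAt.differentiableWithinAt
  · intro x (hx : 0 < x) y (hy : 0 < y) hxy
    rw [(hderiv x hx.le).deriv, (hderiv y hy.le).deriv]
    apply div_le_div_of_nonneg_left (by linarith) (by positivity)
    have : h * x ≤ h * y := mul_le_mul_of_nonneg_left hxy hh₀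
    nlinarith

theorem concaveOn_gaussianSecrecyRate (hh₀ : 0 ≤ h) (hh₁ : h ≤ 1) :
    ConcaveOn ℝ (Set.Ici 0) (gaussianSecrecyRate h) := by
  refine ((concaveOn_log_one_add_sub_log_one_add_mul hh₀ hh₁).smul
    (by positivity : (0 : ℝ) ≤ 1 / (2 * log 2))).congr fun x (hx : 0 ≤ x) => ?_
  have : 0 < 1 + h * x := by positivity
  dsimp only
  rw [smul_eq_mul, gaussianSecrecyRate, logb, log_div (by positivity) this.ne']
  ring

theorem half_mul_logb_div_eq_mul_gaussianSecrecyRate {a : ℝ} (ha : 0 < a) (p : ℝ) :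
    a / 2 * logb 2 ((a + p) / (a + h * p)) = a * gaussianSecrecyRate h (p / a) := by
  rw [gaussianSecrecyRate, show (1 + p / a) / (1 + h * (p / a)) = (a + p) / (a + h * p) by
    field_simp]
  ring

theorem half_mul_logb_one_add_div_eq_mul_gaussianSecrecyRate (a p : ℝ) :
    a / 2 * logb 2 (1 + p / a) = a * gaussianSecrecyRate 0 (p / a) := by
  rw [gaussianSecrecyRate, zero_mul, add_zero, div_one]
  ring

end SecrecyRate

/-- The choice `α_k* = P_k / Σ_j P_j` simultaneously maximizes both
`f(α) = Σ_k (α_k/2)·log₂((α_k+P_k)/(α_k+h·P_k))` and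
`g(α) = Σ_k (α_k/2)·log₂(1+P_k/α_k)` over probability vectors `α` with positive
entries, and the maxima are `(1/2)·log₂((1+P_K)/(1+h·P_K))` and `(1/2)·log₂(1+P_K)`
respectively, where `P_K = Σ_k P_k`. -/
theorem tdma_optimal_time_sharing
    (K : ℕ) (hK : 0 < K) (P : Fin K → ℝ) (hP : ∀ k, 0 < P k)
    (h : ℝ) (hh0 : 0 < h) (hh1 : h < 1) :
    let PK : ℝ := ∑ k, P k
    let f : (Fin K → ℝ) → ℝ := fun α =>
      ∑ k, (α k / 2) * logb 2 ((α k + P k) / (α k + h * P k))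
    let g : (Fin K → ℝ) → ℝ := fun α =>
      ∑ k, (α k / 2) * logb 2 (1 + P k / α k)
    let αstar : Fin K → ℝ := fun k => P k / PK
    (∀ α : Fin K → ℝ, (∀ k, 0 < α k) → (∑ k, α k) = 1 → f α ≤ f αstar) ∧
    (∀ α : Fin K → ℝ, (∀ k, 0 < α k) → (∑ k, α k) = 1 → g α ≤ g αstar) ∧
    f αstar = (1 / 2) * logb 2 ((1 + PK) / (1 + h * PK)) ∧
    g αstar = (1 / 2) * logb 2 (1 + PK) := by
  intro PK f g αstar
  have hPK : 0 < PK := sum_pos (fun k _ => hP k) ⟨⟨0, hK⟩, mem_univ _⟩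
  have hαstar k : 0 < αstar k := div_pos (hP k) hPK
  have hf α (hα : ∀ k, 0 < α k) : f α = ∑ k, α k * gaussianSecrecyRate h (P k / α k) :=
    sum_congr rfl fun k _ => half_mul_logb_div_eq_mul_gaussianSecrecyRate (hα k) (P k)
  have hg α : g α = ∑ k, α k * gaussianSecrecyRate 0 (P k / α k) :=
    sum_congr rfl fun k _ => half_mul_logb_one_add_div_eq_mul_gaussianSecrecyRate (α k) (P k)
  have hstar (h' : ℝ) : ∑ k, αstar k * gaussianSecrecyRate h' (P k / αstar k) =
      gaussianSecrecyRate h' PK :=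
    sum_mul_perspective_of_proportional _ (fun k _ => (hP k).ne') hPK.ne'
  have hratio (α : Fin K → ℝ) (hα : ∀ k, 0 < α k) : ∀ k ∈ univ, P k / α k ∈ Set.Ici 0 :=
    fun k _ => (div_pos (hP k) (hα k)).le
  refine ⟨fun α hα hα₁ => ?_, fun α hα hα₁ => ?_, by rw [hf αstar hαstar, hstar]; rfl,
    by rw [hg, hstar, gaussianSecrecyRate, zero_mul, add_zero, div_one]⟩
  · rw [hf α hα, hf αstar hαstar, hstar]
    exact (concaveOn_gaussianSecrecyRate hh0.le hh1.le).sum_mul_perspective_le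
      (fun k _ => hα k) hα₁ (hratio α hα)
  · rw [hg, hg, hstar]
    exact (concaveOn_gaussianSecrecyRate le_rfl zero_le_one).sum_mul_perspective_le
      (fun k _ => hα k) hα₁ (hratio α hα)
end

section
/- The collective-constraints superposition region dominates the TDMA region at the sum-rate: the maximum sum-rate of the TDMA region, Σ_k min{(α_k/(2δ))log((α_k+P_k)/(α_k+hP_k)), (α_k/2)log(1+P_k/α_k)}, is at most min{(1/2)log(1+P_K), (1/(2δ))log((1+P_K)/(1+hP_K))} for every probability vector α with positive entries, where P_K = Σ_k P_k. -/
/-!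
Both bounds are Jensen's inequality for a perspective: with `x_k = P_k / α_k`, the terms are
`α_k f(x_k)` for `f(x) = log((1 + x)/(1 + h x))` (and its case `h = 0`, `log(1 + x)`), and
`Σ α_k f(x_k) ≤ f(Σ α_k x_k) = f(P_K)` since `f` is concave on `[0, ∞)`. Concavity of `f` follows
from that of the Möbius map `x ↦ (1 + x)/(1 + h x)` for `0 ≤ h ≤ 1`, composed with the concave,
increasing `log`.
-/

open Real Finset

theorem ConcaveOn.comp_of_mapsTo {s t : Set ℝ} {f g : ℝ → ℝ} (hf : ConcaveOn ℝ t f)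
    (hf_mono : MonotoneOn f t) (hg : ConcaveOn ℝ s g) (hgst : Set.MapsTo g s t) :
    ConcaveOn ℝ s (f ∘ g) :=
  ⟨hg.1, fun _ hx _ hy _ _ ha hb hab =>
    (hf.2 (hgst hx) (hgst hy) ha hb hab).trans <|
      hf_mono (hf.1 (hgst hx) (hgst hy) ha hb hab) (hgst (hg.1 hx hy ha hb hab))
        (hg.2 hx hy ha hb hab)⟩

theorem concaveOn_logb_Ioi {b : ℝ} (hb : 1 ≤ b) : ConcaveOn ℝ (Set.Ioi 0) (logb b) := by
  have hlogb : logb b = fun x => (log b)⁻¹ • log x := by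
    ext x; rw [smul_eq_mul, logb, div_eq_inv_mul]
  rw [hlogb]
  exact strictConcaveOn_log_Ioi.concaveOn.smul (inv_nonneg.2 (log_nonneg hb))

theorem concaveOn_one_add_div_one_add_mul {h : ℝ} (hh0 : 0 ≤ h) (hh1 : h ≤ 1) :
    ConcaveOn ℝ (Set.Ici 0) fun x => (1 + x) / (1 + h * x) := by
  refine ⟨convex_Ici 0, fun x hx y hy a b ha hb hab => ?_⟩
  rw [Set.mem_Ici] at hx hy
  obtain rfl : b = 1 - a := by linarith
  have hu : 0 < 1 + h * x := by positivity
  have hv : 0 < 1 + h * y := by positivity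
  have hw : 0 < 1 + h * (a * x + (1 - a) * y) := add_pos_of_pos_of_nonneg one_pos
    (mul_nonneg hh0 (add_nonneg (mul_nonneg ha hx) (mul_nonneg hb hy)))
  simp only [smul_eq_mul]
  rw [mul_div_assoc', mul_div_assoc', div_add_div _ _ hu.ne' hv.ne',
    div_le_div_iff₀ (by positivity) hw]
  -- after clearing denominators the gap is `h (1 - h) a (1 - a) (x - y)^2`
  nlinarith [mul_nonneg (mul_nonneg (mul_nonneg (sub_nonneg.2 hh1) hh0) (mul_nonneg ha hb))
    (sq_nonneg (x - y))]

theorem ConcaveOn.sum_mul_apply_div_le {ι : Type*} {s : Finset ι} {f : ℝ → ℝ}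
    (hf : ConcaveOn ℝ (Set.Ici 0) f) {α x : ι → ℝ} (hα : ∀ i ∈ s, 0 < α i)
    (hα_sum : ∑ i ∈ s, α i = 1) (hx : ∀ i ∈ s, 0 ≤ x i) :
    ∑ i ∈ s, α i * f (x i / α i) ≤ f (∑ i ∈ s, x i) := by
  have hjensen := hf.le_map_sum (fun i hi => (hα i hi).le) hα_sum
    (p := fun i => x i / α i) fun i hi => div_nonneg (hx i hi) (hα i hi).le
  simp only [smul_eq_mul] at hjensen
  rwa [sum_congr rfl fun i hi => mul_div_cancel₀ (x i) (hα i hi).ne'] at hjensen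

theorem sum_mul_apply_add_div_add_mul_le {ι : Type*} {s : Finset ι} {f : ℝ → ℝ}
    (hf : ConcaveOn ℝ (Set.Ioi 0) f) (hf_mono : MonotoneOn f (Set.Ioi 0)) {h : ℝ} (hh0 : 0 ≤ h)
    (hh1 : h ≤ 1) {α P : ι → ℝ} (hα : ∀ i ∈ s, 0 < α i) (hα_sum : ∑ i ∈ s, α i = 1)
    (hP : ∀ i ∈ s, 0 ≤ P i) :
    ∑ i ∈ s, α i * f ((α i + P i) / (α i + h * P i)) ≤
      f ((1 + ∑ i ∈ s, P i) / (1 + h * ∑ i ∈ s, P i)) := by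
  have hconcave : ConcaveOn ℝ (Set.Ici 0) (f ∘ fun x => (1 + x) / (1 + h * x)) :=
    hf.comp_of_mapsTo hf_mono (concaveOn_one_add_div_one_add_mul hh0 hh1) fun x hx => by
      rw [Set.mem_Ici] at hx; exact Set.mem_Ioi.2 (by positivity)
  refine (sum_congr rfl fun i hi => ?_).trans_le (hconcave.sum_mul_apply_div_le hα hα_sum hP)
  have hαi := (hα i hi).ne'
  rw [Function.comp_apply]
  congr 2
  field_simp

theorem tdma_sum_rate_dominated_general
    (K : ℕ) (P : Fin K → ℝ) (hP : ∀ k, 0 < P k)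
    (h δ : ℝ) (hh0 : 0 < h) (hh1 : h < 1) (hδ0 : 0 < δ)
    (α : Fin K → ℝ) (hα : ∀ k, 0 < α k) (hαsum : (∑ k, α k) = 1) :
    ∑ k, min ((α k / (2 * δ)) * logb 2 ((α k + P k) / (α k + h * P k)))
             ((α k / 2) * logb 2 (1 + P k / α k))
      ≤ min ((1 / 2) * logb 2 (1 + ∑ k, P k))
            ((1 / (2 * δ)) * logb 2 ((1 + ∑ k, P k) / (1 + h * ∑ k, P k))) := by
  have hjensen {c : ℝ} (hc0 : 0 ≤ c) (hc1 : c ≤ 1) :=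
    sum_mul_apply_add_div_add_mul_le (concaveOn_logb_Ioi one_le_two)
      (strictMonoOn_logb one_lt_two).monotoneOn hc0 hc1
      (fun k _ => hα k) hαsum (fun k _ => (hP k).le)
  refine le_min ?_ ?_
  · calc _ ≤ ∑ k, (α k / 2) * logb 2 (1 + P k / α k) := sum_le_sum fun k _ => min_le_right _ _
      _ = 1 / 2 * ∑ k, α k * logb 2 ((α k + P k) / (α k + 0 * P k)) := by
          rw [mul_sum]
          refine sum_congr rfl fun k _ => ?_
          rw [zero_mul, add_zero, add_div, div_self (hα k).ne']
          ring
      _ ≤ 1 / 2 * logb 2 ((1 + ∑ k, P k) / (1 + 0 * ∑ k, P k)) := by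
          gcongr; exact hjensen le_rfl zero_le_one
      _ = _ := by rw [zero_mul, add_zero, div_one]
  · calc _ ≤ ∑ k, (α k / (2 * δ)) * logb 2 ((α k + P k) / (α k + h * P k)) :=
          sum_le_sum fun k _ => min_le_left _ _
      _ = 1 / (2 * δ) * ∑ k, α k * logb 2 ((α k + P k) / (α k + h * P k)) := by
          rw [mul_sum]
          exact sum_congr rfl fun k _ => by ring
      _ ≤ _ := by gcongr; exact hjensen hh0.le hh1.le

/-- The TDMA sum-rate is dominated by the collective-constraints sum
capacity: for every probability vector `α` with positive entries,
`Σ_k min{(α_k/(2δ))log₂((α_k+P_k)/(α_k+hP_k)), (α_k/2)log₂(1+P_k/α_k)}`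
`≤ min{(1/2)log₂(1+P_K), (1/(2δ))log₂((1+P_K)/(1+hP_K))}` with `P_K = Σ_k P_k`. -/
theorem tdma_sum_rate_dominated
    (K : ℕ) (hK : 0 < K) (P : Fin K → ℝ) (hP : ∀ k, 0 < P k)
    (h δ : ℝ) (hh0 : 0 < h) (hh1 : h < 1) (hδ0 : 0 < δ) (hδ1 : δ ≤ 1)
    (α : Fin K → ℝ) (hα : ∀ k, 0 < α k) (hαsum : (∑ k, α k) = 1) :
    ∑ k, min ((α k / (2 * δ)) * logb 2 ((α k + P k) / (α k + h * P k)))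
             ((α k / 2) * logb 2 (1 + P k / α k))
      ≤ min ((1 / 2) * logb 2 (1 + ∑ k, P k))
            ((1 / (2 * δ)) * logb 2 ((1 + ∑ k, P k) / (1 + h * ∑ k, P k))) :=
  tdma_sum_rate_dominated_general K P hP h δ hh0 hh1 hδ0 α hα hαsum
end
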